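/- arXiv:2105.06144 — 2 statements merged into one kernel-verified Lean document; each statement's English description precedes it below -/
import Mathlib

section
/- Fix an (m−2k)-subset S of [m] with m > 2k. The set E_S of edges {A, A ∪ S} of H(m,k), where A ranges over all k-subsets of [m] \ S, is a pairwise 3-disjoint set of edges of H(m,k) of cardinality C(2k,k). -/
open Finset

/-- Vertex type of the bipartite Kneser graph: `k`-subsets of `[m]` on the left,
`(m-k)`-subsets on the right. -/
abbrev KVert (m k : ℕ) :=
  {A : Finset (Fin m) // A.card = k} ⊕ {B : Finset (Fin m) // B.card = m - k}

def bkAdj (m k : ℕ) : KVert m k → KVert m k → Prop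
  | Sum.inl A, Sum.inr B => A.1 ⊆ B.1
  | Sum.inr B, Sum.inl A => A.1 ⊆ B.1
  | _, _ => False

/-- The bipartite Kneser graph `H(m,k)`. -/
def HBK (m k : ℕ) : SimpleGraph (KVert m k) where
  Adj := bkAdj m k
  symm := by
    refine ⟨fun u v h => ?_⟩
    cases u <;> cases v <;> simp_all [bkAdj]
  loopless := by
    refine ⟨fun u => ?_⟩
    cases u <;> simp [bkAdj]

instance (m k : ℕ) : DecidableRel (HBK m k).Adj := fun a b =>
  match a, b with
  | Sum.inl A, Sum.inr B => inferInstanceAs (Decidable (A.1 ⊆ B.1))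
  | Sum.inr B, Sum.inl A => inferInstanceAs (Decidable (A.1 ⊆ B.1))
  | Sum.inl _, Sum.inl _ => inferInstanceAs (Decidable False)
  | Sum.inr _, Sum.inr _ => inferInstanceAs (Decidable False)

/-! Every `A` lies outside `S`, so `A ⊆ A' ∪ S` forces `A ⊆ A'`, and equal sizes give `A = A'`;
hence distinct edges of `E_S` have distinct ends and no cross adjacencies. The `k`-subsets of
`[m] \ S` are counted by `C(2k, k)` since `|[m] \ S| = 2k`. -/

namespace Finset

variable {α : Type*} [DecidableEq α]

lemma eq_of_subset_union_of_disjoint {A A' S : Finset α} (hAS : Disjoint A S)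
    (hcard : A'.card ≤ A.card) (h : A ⊆ A' ∪ S) : A = A' :=
  eq_of_subset_of_card_le (hAS.left_le_of_le_sup_right h) hcard

variable [Fintype α]

lemma card_union_of_subset_compl {A S : Finset α} (hA : A ⊆ Sᶜ) :
    (A ∪ S).card = A.card + S.card :=
  card_union_of_disjoint (subset_compl_iff_disjoint_right.mp hA)

lemma not_subset_union_of_subset_compl {A A' S : Finset α} (hA : A ⊆ Sᶜ)
    (hcard : A.card = A'.card) (hne : A ≠ A') : ¬ A ⊆ A' ∪ S :=
  fun h => hne (eq_of_subset_union_of_disjoint (subset_compl_iff_disjoint_right.mp hA) hcard.ge h)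

end Finset

theorem ES_pairwise_threeDisjoint_general (m k : ℕ) (hm : 2 * k < m)
    (S : Finset (Fin m)) (hS : S.card = m - 2 * k) :
    (∀ A : Finset (Fin m), A ⊆ Sᶜ → A.card = k →
        A ⊆ A ∪ S ∧ (A ∪ S).card = m - k) ∧
    (∀ A A' : Finset (Fin m), A ⊆ Sᶜ → A' ⊆ Sᶜ → A.card = k → A'.card = k → A ≠ A' →
        A ∪ S ≠ A' ∪ S ∧ ¬ A ⊆ A' ∪ S ∧ ¬ A' ⊆ A ∪ S) ∧
    (Sᶜ.powersetCard k).card = (2 * k).choose k := by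
  refine ⟨fun A hA hcA => ⟨subset_union_left, ?_⟩, fun A A' hA hA' hcA hcA' hne => ?_, ?_⟩
  · rw [card_union_of_subset_compl hA, hcA, hS]
    omega
  · have hAA' := not_subset_union_of_subset_compl hA (hcA.trans hcA'.symm) hne
    refine ⟨fun h => hAA' (h ▸ subset_union_left), hAA', ?_⟩
    exact not_subset_union_of_subset_compl hA' (hcA'.trans hcA.symm) hne.symm
  · rw [card_powersetCard, card_compl, Fintype.card_fin, hS]
    congr 1
    omega

/-- For a fixed `(m-2k)`-subset `S` of `[m]` (with `m > 2k`), the edges `{A, A ∪ S}`,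
for `A` a `k`-subset of `[m] \ S`, form a pairwise 3-disjoint set of edges of `H(m,k)`
of cardinality `C(2k,k)`. -/
theorem ES_pairwise_threeDisjoint (m k : ℕ) (hk : 1 ≤ k) (hm : 2 * k < m)
    (S : Finset (Fin m)) (hS : S.card = m - 2 * k) :
    (∀ A : Finset (Fin m), A ⊆ Sᶜ → A.card = k →
        A ⊆ A ∪ S ∧ (A ∪ S).card = m - k) ∧
    (∀ A A' : Finset (Fin m), A ⊆ Sᶜ → A' ⊆ Sᶜ → A.card = k → A'.card = k → A ≠ A' →
        A ∪ S ≠ A' ∪ S ∧ ¬ A ⊆ A' ∪ S ∧ ¬ A' ⊆ A ∪ S) ∧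
    (Sᶜ.powersetCard k).card = (2 * k).choose k :=
  ES_pairwise_threeDisjoint_general m k hm S hS
end

section
/- Let m > 2k, fix an (m−2k)-subset S of [m] and j ∈ [m]\S, and set T = S ∪ {j} (so |T| = m−2k+1). Let W be the union of: all k-subsets A of [m] with A ∩ T = ∅, and all (m−k)-subsets B of [m] with T ⊆ B. Then W is a dominating set of the bipartite Kneser graph H(m,k). -/
open Finset

/-- Membership in the set `W`: left vertices (k-subsets) disjoint from `T`, right
vertices ((m-k)-subsets) containing `T`. -/
def inW (m k : ℕ) (T : Finset (Fin m)) : KVert m k → Prop :=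
  Sum.elim (fun A => Disjoint A.1 T) (fun B => T ⊆ B.1)

instance (m k : ℕ) (T : Finset (Fin m)) : DecidablePred (inW m k T) := fun v =>
  match v with
  | Sum.inl A => inferInstanceAs (Decidable (Disjoint A.1 T))
  | Sum.inr B => inferInstanceAs (Decidable (T ⊆ B.1))

/-! A `k`-set meeting `T` spans, together with `T`, at most `k + |T| - 1 = m - k` points, so it
lies in an `(m-k)`-set containing `T`. An `(m-k)`-set missing a point of `T` keeps at least
`m - k - (|T| - 1) = k` points outside `T`, so it contains a `k`-set disjoint from `T`. -/

variable {α : Type*}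

theorem Finset.exists_union_subset_card_eq_of_not_disjoint [Fintype α] [DecidableEq α]
    {A T : Finset α} {n : ℕ} (hAT : ¬ Disjoint A T) (hcard : #A + #T ≤ n + 1)
    (hn : n ≤ Fintype.card α) : ∃ B : Finset α, A ∪ T ⊆ B ∧ #B = n := by
  have hinter : 0 < #(A ∩ T) := card_pos.mpr (not_disjoint_iff_nonempty_inter.mp hAT)
  have hunion : #(A ∪ T) ≤ n := by
    have := card_union_add_card_inter A T
    omega
  exact exists_superset_card_eq hunion (by simpa using hn)

theorem Finset.exists_subset_disjoint_card_eq_of_not_subset [DecidableEq α]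
    {B T : Finset α} {k : ℕ} (hTB : ¬ T ⊆ B) (hcard : k + #T ≤ #B + 1) :
    ∃ A : Finset α, A ⊆ B ∧ Disjoint A T ∧ #A = k := by
  have hinter : #(B ∩ T) < #T :=
    card_lt_card ⟨inter_subset_right, fun h => hTB (h.trans inter_subset_left)⟩
  have hsdiff : k ≤ #(B \ T) := by
    have := card_sdiff_add_card_inter B T
    omega
  obtain ⟨A, hA, hAcard⟩ := exists_subset_card_eq hsdiff
  exact ⟨A, hA.trans sdiff_subset, disjoint_of_subset_left hA sdiff_disjoint, hAcard⟩

theorem W_dominating_general (m k : ℕ) (hm : 2 * k < m)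
    (S : Finset (Fin m)) (hS : S.card = m - 2 * k) (j : Fin m) (hj : j ∉ S) :
    ∀ v : KVert m k, ¬ inW m k (insert j S) v →
      ∃ w : KVert m k, inW m k (insert j S) w ∧ (HBK m k).Adj v w := by
  have hT : #(insert j S) = m - 2 * k + 1 := by rw [card_insert_of_notMem hj, hS]
  rintro (⟨A, hA⟩ | ⟨B, hB⟩) hv
  · obtain ⟨B, hAB, hB⟩ :=
      exists_union_subset_card_eq_of_not_disjoint (A := A) (n := m - k) hv (by omega) (by simp)
    exact ⟨.inr ⟨B, hB⟩, union_subset_right hAB, union_subset_left hAB⟩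
  · obtain ⟨A, hAB, hAT, hA⟩ :=
      exists_subset_disjoint_card_eq_of_not_subset (B := B) (k := k) hv (by omega)
    exact ⟨.inl ⟨A, hA⟩, hAT, hAB⟩

/-- For `m > 2k`, an `(m-2k)`-subset `S` of `[m]` and `j ∉ S`, set `T = S ∪ {j}`. The
set `W` of all `k`-subsets disjoint from `T` together with all `(m-k)`-subsets
containing `T` is a dominating set of `H(m,k)`. -/
theorem W_dominating (m k : ℕ) (hk : 1 ≤ k) (hm : 2 * k < m)
    (S : Finset (Fin m)) (hS : S.card = m - 2 * k) (j : Fin m) (hj : j ∉ S) :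
    ∀ v : KVert m k, ¬ inW m k (insert j S) v →
      ∃ w : KVert m k, inW m k (insert j S) w ∧ (HBK m k).Adj v w :=
  W_dominating_general m k hm S hS j hj
end
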